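/- Let 0 < ϖ < 2, 0 ≤ β < 1, and consider a Bernoulli(p) source X with p ∈ [0,1/2] passed through the binary erasure transfer matrix with erasure probability β; the message importance loss equals Φ_ϖ(p) = (1−β)·[p·exp(ϖ(1−p)) + (1−p)·exp(ϖp) − 1], and the mutual information equals I(X;Y) = (1−β)·H(p). Write C_β = (1−β)(exp(ϖ/2) − 1). Then the maximum of I(X;Y) over p ∈ [0,1/2] subject to Φ_ϖ(p) ≤ ε equals: 1−β if ε ≥ C_β; and (1−β)·H(p_e) if 0 < ε ≤ C_β, where p_e ∈ [0,1/2] is the solution of (1−β)·[p_e·exp(ϖ(1−p_e)) + (1−p_e)·exp(ϖp_e) − 1] = ε and H(t) = −t·log₂ t − (1−t)·log₂(1−t) is the binary entropy function. -/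

import Mathlib

/-- Binary Shannon entropy (base 2): `H(t) = −t·log₂ t − (1−t)·log₂(1−t)`. -/
noncomputable def binEnt (t : ℝ) : ℝ :=
  -(t * Real.logb 2 t) - (1 - t) * Real.logb 2 (1 - t)

/-!
Both `Φ_ϖ` and `I(X;Y)` are positive multiples of functions of `p` that increase on `[0, 1/2]`:
the Bernoulli importance `p e^{ϖ(1-p)} + (1-p) e^{ϖp}` (strictly, as long as `0 < ϖ ≤ 2`) and
the binary entropy. So the feasible set `{p | Φ_ϖ(p) ≤ ε}` is an initial segment of `[0, 1/2]`,
whose largest point — `1/2` when `ε ≥ C_β`, and `p_e` otherwise — also maximises `I(X;Y)`.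
-/

open Real Set

lemma binEnt_eq_binEntropy_div_log_two (t : ℝ) : binEnt t = binEntropy t / log 2 := by
  simp only [binEnt, binEntropy, logb, log_inv]
  ring

lemma binEnt_half : binEnt (1 / 2) = 1 := by
  rw [binEnt_eq_binEntropy_div_log_two, one_div, binEntropy_two_inv]
  exact div_self (log_pos one_lt_two).ne'

lemma binEnt_monotoneOn : MonotoneOn binEnt (Icc 0 (1 / 2)) := by
  rw [one_div]
  intro a ha b hb hab
  simp only [binEnt_eq_binEntropy_div_log_two]
  exact div_le_div_of_nonneg_right (binEntropy_strictMonoOn.monotoneOn ha hb hab)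
    (log_pos one_lt_two).le

/-- The message importance measure `L(ϖ, (p, 1 - p))` of a Bernoulli(`p`) distribution. -/
noncomputable def bernoulliMIM (ϖ p : ℝ) : ℝ :=
  p * exp (ϖ * (1 - p)) + (1 - p) * exp (ϖ * p)

lemma bernoulliMIM_half (ϖ : ℝ) : bernoulliMIM ϖ (1 / 2) = exp (ϖ / 2) := by
  rw [bernoulliMIM, show ϖ * (1 - 1 / 2) = ϖ / 2 by ring, show ϖ * (1 / 2) = ϖ / 2 by ring]
  ring

lemma hasDerivAt_bernoulliMIM (ϖ p : ℝ) :
    HasDerivAt (bernoulliMIM ϖ)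
      ((1 - ϖ * p) * exp (ϖ * (1 - p)) - (1 - ϖ * (1 - p)) * exp (ϖ * p)) p := by
  have h₁ : HasDerivAt (fun x ↦ ϖ * (1 - x)) (-ϖ) p := by
    simpa using ((hasDerivAt_id p).const_sub 1).const_mul ϖ
  have h₂ : HasDerivAt (fun x ↦ ϖ * x) ϖ p := by
    simpa using (hasDerivAt_id p).const_mul ϖ
  refine (((hasDerivAt_id p).mul h₁.exp).add
    (((hasDerivAt_id p).const_sub 1).mul h₂.exp)).congr_deriv ?_
  simp only [id_eq]
  ring

lemma bernoulliMIM_strictMonoOn {ϖ : ℝ} (hϖ : 0 < ϖ) (hϖ2 : ϖ ≤ 2) :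
    StrictMonoOn (bernoulliMIM ϖ) (Icc 0 (1 / 2)) := by
  refine strictMonoOn_of_deriv_pos (convex_Icc _ _)
    (fun x _ ↦ (hasDerivAt_bernoulliMIM ϖ x).continuousAt.continuousWithinAt) ?_
  intro p hp
  rw [interior_Icc] at hp
  obtain ⟨hp0, hp1⟩ := hp
  rw [(hasDerivAt_bernoulliMIM ϖ p).deriv]
  have hgap : exp (ϖ * p) < exp (ϖ * (1 - p)) := exp_lt_exp.mpr (by nlinarith)
  have hweight : 0 < 1 - ϖ * p := by nlinarith
  -- the derivative exceeds `ϖ (1 - 2p) e^{ϖp} > 0`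
  nlinarith [mul_lt_mul_of_pos_left hgap hweight,
    mul_pos (mul_pos hϖ (by linarith : 0 < 1 - 2 * p)) (exp_pos (ϖ * p))]

lemma MonotoneOn.isGreatest_setOf_exists {α β : Type*} [Preorder α] [Preorder β] {s : Set α}
    {P : α → Prop} {g : α → β} {a : α} (hg : MonotoneOn g s)
    (ha : IsGreatest {p | p ∈ s ∧ P p} a) :
    IsGreatest {r | ∃ p ∈ s, P p ∧ r = g p} (g a) := by
  have hset : {r | ∃ p ∈ s, P p ∧ r = g p} = g '' {p | p ∈ s ∧ P p} := by
    ext r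
    simp only [mem_ofPred_eq, mem_image, and_assoc, eq_comm]
  rw [hset]
  exact (hg.mono fun _ hp ↦ hp.1).map_isGreatest ha

theorem bitrate_bec_mim_constraint_general (ϖ β ε : ℝ) (hϖ : 0 < ϖ) (hϖ2 : ϖ < 2)
    (hβ1 : β < 1) :
    ((1 - β) * (Real.exp (ϖ / 2) - 1) ≤ ε →
      IsGreatest {r : ℝ | ∃ p ∈ Set.Icc (0:ℝ) (1/2),
          (1 - β) * (p * Real.exp (ϖ * (1 - p)) + (1 - p) * Real.exp (ϖ * p) - 1) ≤ ε ∧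
          r = (1 - β) * binEnt p}
        (1 - β)) ∧
    (ε ≤ (1 - β) * (Real.exp (ϖ / 2) - 1) →
      ∀ pe ∈ Set.Icc (0:ℝ) (1/2),
        (1 - β) * (pe * Real.exp (ϖ * (1 - pe)) + (1 - pe) * Real.exp (ϖ * pe) - 1) = ε →
        IsGreatest {r : ℝ | ∃ p ∈ Set.Icc (0:ℝ) (1/2),
            (1 - β) * (p * Real.exp (ϖ * (1 - p)) + (1 - p) * Real.exp (ϖ * p) - 1) ≤ ε ∧
            r = (1 - β) * binEnt p}
          ((1 - β) * binEnt pe)) := by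
  have hβ : 0 < 1 - β := sub_pos.mpr hβ1
  have hrate : MonotoneOn (fun p ↦ (1 - β) * binEnt p) (Icc 0 (1 / 2)) :=
    fun a ha b hb hab ↦ mul_le_mul_of_nonneg_left (binEnt_monotoneOn ha hb hab) hβ.le
  refine ⟨fun hC ↦ ?_, fun _ pe hpe hpeε ↦ ?_⟩
  · have hhalf : IsGreatest {p | p ∈ Icc (0 : ℝ) (1 / 2) ∧
        (1 - β) * (bernoulliMIM ϖ p - 1) ≤ ε} (1 / 2) :=
      ⟨⟨right_mem_Icc.mpr (by norm_num), by rwa [bernoulliMIM_half]⟩, fun p hp ↦ hp.1.2⟩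
    have := hrate.isGreatest_setOf_exists hhalf
    rwa [binEnt_half, mul_one] at this
  · have hpe_max : IsGreatest {p | p ∈ Icc (0 : ℝ) (1 / 2) ∧
        (1 - β) * (bernoulliMIM ϖ p - 1) ≤ ε} pe := by
      refine ⟨⟨hpe, hpeε.le⟩, fun p ⟨hp, hpε⟩ ↦ ?_⟩
      have hle : bernoulliMIM ϖ p ≤ bernoulliMIM ϖ pe :=
        (sub_le_sub_iff_right 1).mp (le_of_mul_le_mul_left (hpε.trans hpeε.ge) hβ)
      exact ((bernoulliMIM_strictMonoOn hϖ hϖ2.le).le_iff_le hp hpe).mp hle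
    exact hrate.isGreatest_setOf_exists hpe_max

/-- Bitrate of the binary erasure channel constrained by a message
importance loss `ε > 0`. The loss equals
`Φ_ϖ(p) = (1−β)·[p·exp(ϖ(1−p)) + (1−p)·exp(ϖp) − 1]`, the mutual information equals
`I(X;Y) = (1−β)·H(p)`, and with `C_β = (1−β)(exp(ϖ/2) − 1)`, the maximum of `I(X;Y)` over
`p ∈ [0,1/2]` subject to `Φ_ϖ(p) ≤ ε` is `1−β` when `ε ≥ C_β`, and `(1−β)·H(p_e)` when
`0 < ε ≤ C_β`, where `p_e ∈ [0,1/2]` solves `Φ_ϖ(p_e) = ε`. -/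
theorem bitrate_bec_mim_constraint (ϖ β ε : ℝ) (hϖ : 0 < ϖ) (hϖ2 : ϖ < 2)
    (hβ0 : 0 ≤ β) (hβ1 : β < 1) (hε : 0 < ε) :
    ((1 - β) * (Real.exp (ϖ / 2) - 1) ≤ ε →
      IsGreatest {r : ℝ | ∃ p ∈ Set.Icc (0:ℝ) (1/2),
          (1 - β) * (p * Real.exp (ϖ * (1 - p)) + (1 - p) * Real.exp (ϖ * p) - 1) ≤ ε ∧
          r = (1 - β) * binEnt p}
        (1 - β)) ∧
    (ε ≤ (1 - β) * (Real.exp (ϖ / 2) - 1) →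
      ∀ pe ∈ Set.Icc (0:ℝ) (1/2),
        (1 - β) * (pe * Real.exp (ϖ * (1 - pe)) + (1 - pe) * Real.exp (ϖ * pe) - 1) = ε →
        IsGreatest {r : ℝ | ∃ p ∈ Set.Icc (0:ℝ) (1/2),
            (1 - β) * (p * Real.exp (ϖ * (1 - p)) + (1 - p) * Real.exp (ϖ * p) - 1) ≤ ε ∧
            r = (1 - β) * binEnt p}
          ((1 - β) * binEnt pe)) :=
  bitrate_bec_mim_constraint_general ϖ β ε hϖ hϖ2 hβ1
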